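/- If G is an unweighted undirected graph with girth greater than t+1, then the only t-spanner of G is G itself. -/

import Mathlib

/-! If an edge `uv` of `G` were missing from the spanner `S`, then `S` would still join `u` and `v`
by a path of length at most `t`, and that path closes up with the edge `uv` to a cycle of `G` of
length at most `t + 1`. -/

namespace SimpleGraph

variable {V : Type*} {G H : SimpleGraph V} {u v : V}

lemma egirth_le_length_add_one_of_adj (hadj : G.Adj u v) {p : G.Walk v u} (hp : p.IsPath)
    (huv : s(u, v) ∉ p.edges) : G.egirth ≤ p.length + 1 := by
  simpa using egirth_le_length ((Walk.cons_isCycle_iff p hadj).mpr ⟨hp, huv⟩)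

lemma egirth_le_edist_add_one_of_le (hHG : H ≤ G) (hadj : G.Adj u v) (hH : ¬H.Adj u v) :
    G.egirth ≤ H.edist u v + 1 := by
  classical
  rcases eq_or_ne (H.edist v u) ⊤ with htop | hfin
  · simp [edist_comm (u := u), htop]
  obtain ⟨p, hp⟩ := exists_walk_of_edist_ne_top hfin
  have hpath : p.bypass.IsPath := p.bypass_isPath
  have hedges : ∀ e ∈ p.bypass.edges, e ∈ G.edgeSet := fun e he =>
    edgeSet_mono hHG (p.bypass.edges_subset_edgeSet he)
  have huv : s(u, v) ∉ p.bypass.edges := fun he => hH (p.bypass.edges_subset_edgeSet he)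
  calc G.egirth ≤ (p.bypass.transfer G hedges).length + 1 :=
        egirth_le_length_add_one_of_adj hadj (hpath.transfer hedges)
          (by rwa [Walk.edges_transfer])
    _ ≤ H.edist u v + 1 := by
        rw [Walk.length_transfer, edist_comm, ← hp]
        gcongr
        exact_mod_cast p.length_bypass_le_length

end SimpleGraph

open SimpleGraph in
theorem spanner_of_large_girth_general {V : Type*} (G S : SimpleGraph V) (hS : S ≤ G) (t : ℕ)
    (hgirth : ((t : ℕ∞) + 1) < G.girth)
    (hspanner : ∀ u v : V, S.edist u v ≤ (t : ℕ∞) * G.edist u v) :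
    S = G := by
  refine le_antisymm hS fun u v hadj => ?_
  by_contra hS_uv
  have hdist : S.edist u v ≤ t := by
    simpa [edist_eq_one_iff_adj.mpr hadj] using hspanner u v
  have hcycle : G.egirth ≤ t + 1 :=
    (egirth_le_edist_add_one_of_le hS hadj hS_uv).trans (by gcongr)
  exact (hgirth.trans_le G.egirth.natCast_toNat_le_self).not_ge hcycle

/-- If `G` has girth greater than `t + 1`, then the only `t`-spanner of `G` is `G` itself. -/
theorem spanner_of_large_girth {V : Type*} (G S : SimpleGraph V) (hS : S ≤ G) (t : ℕ)
    (ht : 1 ≤ t) (hgirth : ((t : ℕ∞) + 1) < G.girth)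
    (hspanner : ∀ u v : V, S.edist u v ≤ (t : ℕ∞) * G.edist u v) :
    S = G :=
  spanner_of_large_girth_general G S hS t hgirth hspanner
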